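/- With notation as in the random model, for each fixed i with 0 ≤ i ≤ 0.9·log_b n, the random variable |T*_i| satisfies |T*_i| = E(|T*_i|) + O(√(pn)·log log n) with probability at least 1 − 2·exp(−(log log n)²/3). -/

import Mathlib

open MeasureTheory Finset
open scoped Classical

/-- The Bernoulli(p) measure on `Bool`. -/
noncomputable def bern (p : ℝ) : Measure Bool :=
  ENNReal.ofReal p • Measure.dirac true + ENNReal.ofReal (1 - p) • Measure.dirac false

/-- The law of the random subset `[n]_p`, as the product of `n` Bernoulli(p) measures. -/
noncomputable def randMeasure (n : ℕ) (p : ℝ) : Measure (Fin n → Bool) :=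
  Measure.pi fun _ => bern p

/-- The realization of the random subset `[n]_p ⊆ {1,...,n}` from a sample `ω`. -/
noncomputable def randSet (n : ℕ) (ω : Fin n → Bool) : Finset ℕ :=
  (Finset.univ.filter fun i : Fin n => ω i = true).image fun i => (i : ℕ) + 1

/-- `k` is an `i`-th subpower of `b` if `k = b^i · l` with `b ∤ l`. -/
def isSubpower (b i k : ℕ) : Prop := ∃ l : ℕ, k = b ^ i * l ∧ ¬ b ∣ l

/-- `v` lies in `S` at even distance from the smallest vertex of its component in the
subgraph of `D` induced on `S`, where `D` has arcs `(x,y)` with `b*x = a*y`: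
there is a directed path `c 0 → ⋯ → c k = v` of even length inside `S` such that
`c 0` has no in-neighbour inside `S`. -/
def evenDist (a b : ℕ) (S : Finset ℕ) (v : ℕ) : Prop :=
  ∃ (k : ℕ) (c : Fin (k + 1) → ℕ), Even k ∧ c (Fin.last k) = v ∧
    (∀ i, c i ∈ S) ∧
    (∀ i : Fin k, b * c i.castSucc = a * c i.succ) ∧
    ∀ u : ℕ, b * u = a * c 0 → u ∉ S

/-- `|T*_i|`: the number of `i`-th subpowers of `b` in `S = [n]_p` lying at even
distance from the smallest vertex of their component in `D[S]`. -/
noncomputable def TstarCard (a b n i : ℕ) (S : Finset ℕ) : ℕ :=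
  ((Finset.Icc 1 n).filter fun v => isSubpower b i v ∧ evenDist a b S v).card

/-!
`|T*_i|` is the sum, over the `i`-th subpowers `v ≤ n`, of the indicators of `v ∈ T*_i`. Whether
`v ∈ T*_i` is decided by the coordinates of `[n]_p` on the chain `{v (a/b)^m : m ∈ ℤ}` through `v`
(its component in `D`), and since `a` and `b` are coprime, distinct `i`-th subpowers lie on distinct
chains. The indicators are therefore functions of disjoint blocks of independent coordinates, so by
Hoeffding's lemma the centred sum is sub-Gaussian with variance proxy at most `n / 4`, and the
Chernoff bound at deviation `√(n / 6) · log log n` gives the tail `2 exp (-(log log n)² / 3)`.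
-/

open ProbabilityTheory
open scoped NNReal

section ProductMeasure

variable {ι : Type*} [Fintype ι] {α : ι → Type*} [∀ i, MeasurableSpace (α i)]
  {μ : ∀ i, Measure (α i)} [∀ i, IsProbabilityMeasure (μ i)]

theorem integral_mul_of_dependsOn_compl {J : Set ι} {g h : (Π i, α i) → ℝ}
    (hg : DependsOn g J) (hh : DependsOn h Jᶜ) :
    ∫ x, g x * h x ∂Measure.pi μ = (∫ x, g x ∂Measure.pi μ) * ∫ x, h x ∂Measure.pi μ := by
  obtain ⟨G, rfl⟩ := dependsOn_iff_exists_comp.mp hg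
  obtain ⟨H, rfl⟩ := dependsOn_iff_exists_comp.mp hh
  have hmp := measurePreserving_piEquivPiSubtypeProd μ (· ∈ J)
  have hprod := hmp.integral_comp' fun z => G z.1 * H z.2
  have hfst := hmp.integral_comp' fun z => G z.1
  have hsnd := hmp.integral_comp' fun z => H z.2
  rw [integral_prod_mul] at hprod
  rw [integral_fun_fst, probReal_univ, one_smul] at hfst
  rw [integral_fun_snd, probReal_univ, one_smul] at hsnd
  simp only [Function.comp_apply]
  exact hprod.trans (by rw [← hfst, ← hsnd]; rfl)

theorem integral_prod_of_dependsOn {κ : Type*} {s : Finset κ} {g : κ → (Π i, α i) → ℝ}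
    {J : κ → Set ι} (hg : ∀ k ∈ s, DependsOn (g k) (J k)) (hJ : (s : Set κ).PairwiseDisjoint J) :
    ∫ x, ∏ k ∈ s, g k x ∂Measure.pi μ = ∏ k ∈ s, ∫ x, g k x ∂Measure.pi μ := by
  induction s using Finset.induction_on with
  | empty => simp
  | insert k s hk ih =>
    have hrest : DependsOn (fun x => ∏ l ∈ s, g l x) (J k)ᶜ := by
      intro x y hxy
      refine Finset.prod_congr rfl fun l hl => hg l (mem_insert_of_mem hl) fun i hi => hxy i ?_
      have hkl : Disjoint (J k) (J l) := hJ (mem_coe.2 (mem_insert_self k s))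
        (mem_coe.2 (mem_insert_of_mem hl)) (by rintro rfl; exact hk hl)
      exact fun hik => Set.disjoint_left.mp hkl hik hi
    simp only [prod_insert hk]
    rw [integral_mul_of_dependsOn_compl (hg k (mem_insert_self k s)) hrest,
      ih (fun l hl => hg l (mem_insert_of_mem hl)) (hJ.subset (by simp))]

theorem mgf_sum_of_dependsOn {κ : Type*} {s : Finset κ} {X : κ → (Π i, α i) → ℝ}
    {J : κ → Set ι} (hX : ∀ k ∈ s, DependsOn (X k) (J k)) (hJ : (s : Set κ).PairwiseDisjoint J)
    (t : ℝ) :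
    mgf (fun x => ∑ k ∈ s, X k x) (Measure.pi μ) t = ∏ k ∈ s, mgf (X k) (Measure.pi μ) t := by
  simp only [mgf, mul_sum, Real.exp_sum]
  exact integral_prod_of_dependsOn (fun k hk x y hxy => by rw [hX k hk hxy]) hJ

theorem hasSubgaussianMGF_sum_of_dependsOn [∀ i, Finite (α i)]
    [∀ i, MeasurableSingletonClass (α i)] {κ : Type*} {s : Finset κ} {X : κ → (Π i, α i) → ℝ}
    {c : κ → ℝ≥0} (hX : ∀ k ∈ s, HasSubgaussianMGF (X k) (c k) (Measure.pi μ))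
    {J : κ → Set ι} (hdep : ∀ k ∈ s, DependsOn (X k) (J k))
    (hJ : (s : Set κ).PairwiseDisjoint J) :
    HasSubgaussianMGF (fun x => ∑ k ∈ s, X k x) (∑ k ∈ s, c k) (Measure.pi μ) where
  integrable_exp_mul _ := .of_finite
  mgf_le t := by
    rw [mgf_sum_of_dependsOn hdep hJ t]
    calc ∏ k ∈ s, mgf (X k) (Measure.pi μ) t
        ≤ ∏ k ∈ s, Real.exp (c k * t ^ 2 / 2) :=
          prod_le_prod (fun _ _ => mgf_nonneg) fun k hk => (hX k hk).mgf_le t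
      _ = Real.exp ((∑ k ∈ s, c k : ℝ≥0) * t ^ 2 / 2) := by
          rw [← Real.exp_sum, NNReal.coe_sum, sum_mul, sum_div]

end ProductMeasure

namespace ProbabilityTheory.HasSubgaussianMGF

variable {Ω : Type*} [MeasurableSpace Ω] {μ : Measure Ω} {X : Ω → ℝ} {c : ℝ≥0}

theorem mono (h : HasSubgaussianMGF X c μ) {c' : ℝ≥0} (hc : c ≤ c') :
    HasSubgaussianMGF X c' μ where
  integrable_exp_mul := h.integrable_exp_mul
  mgf_le t := (h.mgf_le t).trans (Real.exp_le_exp.2 (by gcongr))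

theorem one_sub_le_measure_abs_le [IsProbabilityMeasure μ] (h : HasSubgaussianMGF X c μ)
    {ε : ℝ} (hε : 0 ≤ ε) :
    1 - ENNReal.ofReal (2 * Real.exp (-ε ^ 2 / (2 * c))) ≤ μ {ω | |X ω| ≤ ε} := by
  have htail : ∀ Y : Ω → ℝ, HasSubgaussianMGF Y c μ →
      μ {ω | ε ≤ Y ω} ≤ ENNReal.ofReal (Real.exp (-ε ^ 2 / (2 * c))) := fun Y hY => by
    rw [← ofReal_measureReal]
    exact ENNReal.ofReal_le_ofReal (hY.measure_ge_le hε)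
  have hcompl : {ω | |X ω| ≤ ε}ᶜ ⊆ {ω | ε ≤ X ω} ∪ {ω | ε ≤ (-X) ω} := by
    intro ω hω
    simp only [Set.mem_compl_iff, Set.mem_union, Set.mem_ofPred_eq, not_le, Pi.neg_apply] at hω ⊢
    exact (lt_abs.mp hω).imp le_of_lt le_of_lt
  have hmeas : NullMeasurableSet {ω | |X ω| ≤ ε} μ :=
    nullMeasurableSet_le h.aemeasurable.abs aemeasurable_const
  rw [tsub_le_iff_right, ← measure_univ (μ := μ), ← measure_add_measure_compl₀ hmeas, two_mul,
    ENNReal.ofReal_add (Real.exp_nonneg _) (Real.exp_nonneg _)]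
  gcongr
  exact (measure_mono hcompl).trans ((measure_union_le _ _).trans
    (add_le_add (htail X h) (htail (-X) h.neg)))

end ProbabilityTheory.HasSubgaussianMGF

theorem Nat.Coprime.eq_zero_of_pow_mul_eq_pow_mul {a b d l m : ℕ} (hco : a.Coprime b)
    (hl : ¬ b ∣ l) (h : a ^ d * l = b ^ d * m) : d = 0 := by
  by_contra hd
  have hdvd : b ∣ a ^ d * l := h ▸ (dvd_pow_self b hd).mul_right m
  exact hl ((hco.symm.pow_right d).dvd_of_dvd_mul_left hdvd)

/-- `w = v (a/b)^m` for some `m ∈ ℤ`; these chains are the components of `D`. -/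
def SameChain (a b v w : ℕ) : Prop := ∃ j k : ℕ, a ^ j * b ^ k * w = a ^ k * b ^ j * v

namespace SameChain

variable {a b : ℕ}

theorem refl (v : ℕ) : SameChain a b v v := ⟨0, 0, rfl⟩

theorem symm {v w : ℕ} (h : SameChain a b v w) : SameChain a b w v :=
  let ⟨j, k, h⟩ := h
  ⟨k, j, h.symm⟩

theorem trans {u v w : ℕ} (h₁ : SameChain a b u v) (h₂ : SameChain a b v w) :
    SameChain a b u w := by
  obtain ⟨j, k, h₁⟩ := h₁
  obtain ⟨j', k', h₂⟩ := h₂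
  refine ⟨j + j', k + k', ?_⟩
  calc a ^ (j + j') * b ^ (k + k') * w = a ^ j * b ^ k * (a ^ j' * b ^ k' * w) := by ring
    _ = a ^ k' * b ^ j' * (a ^ j * b ^ k * v) := by rw [h₂]; ring
    _ = a ^ (k + k') * b ^ (j + j') * u := by rw [h₁]; ring

theorem of_arc {x y : ℕ} (h : b * x = a * y) : SameChain a b x y :=
  ⟨1, 0, by simpa using h.symm⟩

theorem eq_of_isSubpower {i v w : ℕ} (hb : 0 < b) (hco : a.Coprime b) (h : SameChain a b v w)
    (hv : isSubpower b i v) (hw : isSubpower b i w) : v = w := by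
  obtain ⟨l, rfl, hl⟩ := hv
  obtain ⟨m, rfl, hm⟩ := hw
  obtain ⟨j, k, h⟩ := h
  have ha : 0 < a := Nat.pos_of_ne_zero fun ha => hl <| by
    rw [(Nat.coprime_zero_left b).mp (ha ▸ hco)]
    exact one_dvd l
  wlog hjk : j ≤ k generalizing j k l m
  · exact (this m hm l hl k j h.symm (by omega)).symm
  obtain ⟨d, rfl⟩ := Nat.exists_eq_add_of_le hjk
  have hcancel : b ^ d * m = a ^ d * l := by
    refine Nat.eq_of_mul_eq_mul_left (by positivity : 0 < a ^ j * b ^ j * b ^ i) ?_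
    calc a ^ j * b ^ j * b ^ i * (b ^ d * m) = a ^ j * b ^ (j + d) * (b ^ i * m) := by ring
      _ = a ^ (j + d) * b ^ j * (b ^ i * l) := h
      _ = a ^ j * b ^ j * b ^ i * (a ^ d * l) := by ring
  obtain rfl := hco.eq_zero_of_pow_mul_eq_pow_mul hl hcancel.symm
  simp only [pow_zero, one_mul] at hcancel
  rw [hcancel]

end SameChain

theorem evenDist_congr {a b v : ℕ} {S S' : Finset ℕ}
    (hS : ∀ w, SameChain a b v w → (w ∈ S ↔ w ∈ S')) :
    evenDist a b S v ↔ evenDist a b S' v := by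
  suffices ∀ {S S' : Finset ℕ}, (∀ w, SameChain a b v w → (w ∈ S ↔ w ∈ S')) →
      evenDist a b S v → evenDist a b S' v from
    ⟨this hS, this fun w hw => (hS w hw).symm⟩
  intro S S' hS ⟨k, c, hk, hlast, hmem, harc, hmin⟩
  have hfrom0 : ∀ i, SameChain a b (c 0) (c i) :=
    Fin.induction (.refl _) fun i hi => hi.trans (.of_arc (harc i))
  have hchain : ∀ i, SameChain a b v (c i) := fun i =>
    (hlast ▸ (hfrom0 (Fin.last k)).symm).trans (hfrom0 i)
  refine ⟨k, c, hk, hlast, fun i => (hS _ (hchain i)).mp (hmem i), harc, fun u hu huS => ?_⟩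
  exact hmin u hu ((hS u ((hchain 0).trans (SameChain.of_arc hu).symm)).mpr huS)

theorem mem_randSet {n w : ℕ} {ω : Fin n → Bool} :
    w ∈ randSet n ω ↔ ∃ j : Fin n, ω j = true ∧ (j : ℕ) + 1 = w := by
  simp [randSet]

/-- Coordinate `j` of a sample decides the membership of the vertex `j + 1` (see `randSet`). -/
def chainBlock (a b n v : ℕ) : Set (Fin n) := {j | SameChain a b v (j + 1)}

theorem dependsOn_evenDist_randSet (a b n v : ℕ) :
    DependsOn (fun ω => evenDist a b (randSet n ω) v) (chainBlock a b n v) := by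
  have hmem : ∀ ω ω' : Fin n → Bool, (∀ j ∈ chainBlock a b n v, ω j = ω' j) →
      ∀ w, SameChain a b v w → w ∈ randSet n ω → w ∈ randSet n ω' := by
    intro ω ω' h w hw hωw
    obtain ⟨j, hj, rfl⟩ := mem_randSet.mp hωw
    exact mem_randSet.mpr ⟨j, h j hw ▸ hj, rfl⟩
  intro ω ω' h
  exact propext <| evenDist_congr fun w hw =>
    ⟨hmem ω ω' h w hw, hmem ω' ω (fun j hj => (h j hj).symm) w hw⟩

theorem pairwiseDisjoint_chainBlock {a b : ℕ} (hb : 0 < b) (hco : a.Coprime b) (i n : ℕ) :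
    {v | isSubpower b i v}.PairwiseDisjoint (chainBlock a b n) :=
  fun _ hv _ hw hne => Set.disjoint_left.mpr fun _ hjv hjw =>
    hne ((SameChain.trans hjv (SameChain.symm hjw)).eq_of_isSubpower hb hco hv hw)

theorem TstarCard_eq_sum (a b n i : ℕ) (S : Finset ℕ) :
    (TstarCard a b n i S : ℝ) =
      ∑ v ∈ (Icc 1 n).filter (isSubpower b i), if evenDist a b S v then (1 : ℝ) else 0 := by
  rw [TstarCard, ← filter_filter, sum_boole]

theorem isProbabilityMeasure_bern {p : ℝ} (h0 : 0 ≤ p) (h1 : p ≤ 1) :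
    IsProbabilityMeasure (bern p) := by
  constructor
  simp only [bern, Measure.add_apply, Measure.smul_apply, smul_eq_mul,
    Measure.dirac_apply_of_mem (Set.mem_univ _), mul_one]
  rw [← ENNReal.ofReal_add h0 (by linarith)]
  norm_num

theorem isProbabilityMeasure_randMeasure {p : ℝ} (h0 : 0 ≤ p) (h1 : p ≤ 1) (n : ℕ) :
    IsProbabilityMeasure (randMeasure n p) :=
  have := isProbabilityMeasure_bern h0 h1
  inferInstanceAs (IsProbabilityMeasure (Measure.pi _))

theorem hasSubgaussianMGF_TstarCard_sub_integral {a b : ℕ} (hb : 0 < b) (hco : a.Coprime b)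
    {p : ℝ} (h0 : 0 ≤ p) (h1 : p ≤ 1) (n i : ℕ) :
    HasSubgaussianMGF (fun ω => (TstarCard a b n i (randSet n ω) : ℝ)
        - ∫ w, (TstarCard a b n i (randSet n w) : ℝ) ∂randMeasure n p)
      (n / 4) (randMeasure n p) := by
  have := isProbabilityMeasure_bern h0 h1
  have := isProbabilityMeasure_randMeasure h0 h1 n
  set F := (Icc 1 n).filter (isSubpower b i)
  set Y : ℕ → (Fin n → Bool) → ℝ := fun v ω => if evenDist a b (randSet n ω) v then 1 else 0
  have hcentered : (fun ω => (TstarCard a b n i (randSet n ω) : ℝ)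
        - ∫ w, (TstarCard a b n i (randSet n w) : ℝ) ∂randMeasure n p) =
      fun ω => ∑ v ∈ F, (Y v ω - ∫ w, Y v w ∂randMeasure n p) := by
    simp_rw [TstarCard_eq_sum]
    rw [integral_finsetSum _ fun _ _ => .of_finite]
    simp only [sum_sub_distrib, Y, F]
  have hY : ∀ v, HasSubgaussianMGF (fun ω => Y v ω - ∫ w, Y v w ∂randMeasure n p) (1 / 4)
      (randMeasure n p) := fun v => by
    convert hasSubgaussianMGF_of_mem_Icc (μ := randMeasure n p) (X := Y v) (a := 0) (b := 1)
      Measurable.of_discrete.aemeasurable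
      (ae_of_all _ fun ω => by by_cases h : evenDist a b (randSet n ω) v <;> simp [Y, h])
    norm_num
  have hdep : ∀ v ∈ F, DependsOn (fun ω => Y v ω - ∫ w, Y v w ∂randMeasure n p)
      (chainBlock a b n v) := fun v _ ω ω' h => by
    simp only [Y, dependsOn_evenDist_randSet a b n v h]
  have hF : ∑ _v ∈ F, (1 / 4 : ℝ≥0) ≤ n / 4 := by
    rw [sum_const, nsmul_eq_mul, mul_one_div]
    gcongr
    exact_mod_cast (card_filter_le _ _).trans (Nat.card_Icc 1 n).le
  rw [hcentered]
  exact (hasSubgaussianMGF_sum_of_dependsOn (fun v _ => hY v) hdep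
    ((pairwiseDisjoint_chainBlock hb hco i n).subset fun v hv => (mem_filter.mp hv).2)).mono hF

theorem stmt14_general (a b : ℕ) (hab : a < b) (hco : Nat.Coprime a b)
    (p : ℝ) (hp0 : 0 < p) (hp1 : p < 1) :
    ∃ C : ℝ, 0 < C ∧ ∀ n : ℕ, 3 ≤ n → ∀ i : ℕ, (i : ℝ) ≤ 0.9 * Real.logb b n →
      1 - ENNReal.ofReal (2 * Real.exp (-(Real.log (Real.log n)) ^ 2 / 3))
        ≤ randMeasure n p {ω |
            |(TstarCard a b n i (randSet n ω) : ℝ)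
              - ∫ w, (TstarCard a b n i (randSet n w) : ℝ) ∂ randMeasure n p|
            ≤ C * Real.sqrt (p * n) * Real.log (Real.log n)} := by
  refine ⟨Real.sqrt (1 / (6 * p)), by positivity, fun n hn i _ => ?_⟩
  have := isProbabilityMeasure_randMeasure hp0.le hp1.le n
  have hn : (3 : ℝ) ≤ n := by exact_mod_cast hn
  have hloglog : 0 ≤ Real.log (Real.log n) := by
    refine Real.log_nonneg ((Real.le_log_iff_exp_le (by linarith)).mpr ?_)
    linarith [Real.exp_one_lt_d9]
  have hexponent : -(Real.sqrt (1 / (6 * p)) * Real.sqrt (p * n) * Real.log (Real.log n)) ^ 2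
      / (2 * ((n / 4 : ℝ≥0) : ℝ)) = -Real.log (Real.log n) ^ 2 / 3 := by
    rw [mul_pow, mul_pow, Real.sq_sqrt (by positivity), Real.sq_sqrt (by positivity)]
    push_cast
    field_simp
    ring
  have htail := (hasSubgaussianMGF_TstarCard_sub_integral ((Nat.zero_le a).trans_lt hab) hco
    hp0.le hp1.le n i).one_sub_le_measure_abs_le
    (ε := Real.sqrt (1 / (6 * p)) * Real.sqrt (p * n) * Real.log (Real.log n)) (by positivity)
  rwa [hexponent] at htail

/-- For each `i` with `0 ≤ i ≤ 0.9·log_b n`,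
`|T*_i| = E(|T*_i|) + O(√(pn)·log log n)` with probability at least
`1 − 2·exp(−(log log n)²/3)`. -/
theorem stmt14 (a b : ℕ) (ha : 0 < a) (hab : a < b) (hco : Nat.Coprime a b)
    (p : ℝ) (hp0 : 0 < p) (hp1 : p < 1) :
    ∃ C : ℝ, 0 < C ∧ ∀ n : ℕ, 3 ≤ n → ∀ i : ℕ, (i : ℝ) ≤ 0.9 * Real.logb b n →
      1 - ENNReal.ofReal (2 * Real.exp (-(Real.log (Real.log n)) ^ 2 / 3))
        ≤ randMeasure n p {ω |
            |(TstarCard a b n i (randSet n ω) : ℝ)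
              - ∫ w, (TstarCard a b n i (randSet n w) : ℝ) ∂ randMeasure n p|
            ≤ C * Real.sqrt (p * n) * Real.log (Real.log n)} :=
  stmt14_general a b hab hco p hp0 hp1
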